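/- Let I be a monomial ideal of S = K[x_1,…,x_n]. Then sdepth(S/I) ≤ sdepth(S/√I). -/

import Mathlib

open MvPolynomial

variable {K : Type*} [Field K]

/-- The Stanley space `u·K[Z]`: the `K`-linear span of all `u * v` where `v` is a
monomial in the variables of `Z`. -/
noncomputable def stanleySpace {n : ℕ} (u : MvPolynomial (Fin n) K) (Z : Finset (Fin n)) :
    Submodule K (MvPolynomial (Fin n) K) :=
  Submodule.span K { w | ∃ d : Fin n →₀ ℕ, ↑d.support ⊆ (Z : Set (Fin n)) ∧
    w = u * MvPolynomial.monomial d 1 }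

/-- `u` is a monomial. -/
def IsMonomial {n : ℕ} (u : MvPolynomial (Fin n) K) : Prop :=
  ∃ d : Fin n →₀ ℕ, u = MvPolynomial.monomial d 1

/-- A monomial ideal: an ideal generated by monomials. -/
def IsMonomialIdeal {n : ℕ} (I : Ideal (MvPolynomial (Fin n) K)) : Prop :=
  ∃ G : Set (MvPolynomial (Fin n) K), (∀ u ∈ G, IsMonomial u) ∧ I = Ideal.span G

/-- `(u i, Z i)` is a Stanley decomposition of the ideal `I`:
`I = ⊕ᵢ uᵢ K[Zᵢ]` as `K`-vector spaces, with each `uᵢ` a monomial. -/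
def IsStanleyDecomp {n : ℕ} (I : Ideal (MvPolynomial (Fin n) K)) {s : ℕ}
    (u : Fin s → MvPolynomial (Fin n) K) (Z : Fin s → Finset (Fin n)) : Prop :=
  (∀ i, IsMonomial (u i)) ∧
  iSupIndep (fun i => stanleySpace (u i) (Z i)) ∧
  (⨆ i, stanleySpace (u i) (Z i)) = Submodule.restrictScalars K I

/-- The Stanley depth of a monomial ideal: the largest `k` such that there is a
Stanley decomposition all of whose Stanley spaces have dimension at least `k`. -/
noncomputable def sdepth {n : ℕ} (I : Ideal (MvPolynomial (Fin n) K)) : ℕ :=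
  sSup { k | ∃ (s : ℕ) (u : Fin s → MvPolynomial (Fin n) K) (Z : Fin s → Finset (Fin n)),
    IsStanleyDecomp I u Z ∧ ∀ i, k ≤ (Z i).card }

/-- `(u i, Z i)` is a Stanley decomposition of the quotient `J/I`:
`J/I = ⊕ᵢ u̅ᵢ K[Zᵢ]` as `K`-vector spaces, with each `uᵢ` a monomial of `J` and each space
`uᵢK[Zᵢ]` meeting `I` trivially (so that its image in `S/I` is a free `K[Zᵢ]`-module). -/
def IsStanleyDecompQuot {n : ℕ} (I J : Ideal (MvPolynomial (Fin n) K)) {s : ℕ}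
    (u : Fin s → MvPolynomial (Fin n) K) (Z : Fin s → Finset (Fin n)) : Prop :=
  (∀ i, IsMonomial (u i)) ∧ (∀ i, u i ∈ J) ∧
  (∀ i, Disjoint (stanleySpace (u i) (Z i)) (Submodule.restrictScalars K I)) ∧
  iSupIndep (fun i =>
    (stanleySpace (u i) (Z i)).map (Ideal.Quotient.mkₐ K I).toLinearMap) ∧
  (⨆ i, (stanleySpace (u i) (Z i)).map (Ideal.Quotient.mkₐ K I).toLinearMap)
    = (Submodule.restrictScalars K J).map (Ideal.Quotient.mkₐ K I).toLinearMap

/-- The Stanley depth of the quotient `J/I` of two monomial ideals `I ⊆ J`. -/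
noncomputable def sdepthQuot {n : ℕ} (I J : Ideal (MvPolynomial (Fin n) K)) : ℕ :=
  sSup { k | ∃ (s : ℕ) (u : Fin s → MvPolynomial (Fin n) K) (Z : Fin s → Finset (Fin n)),
    IsStanleyDecompQuot I J u Z ∧ ∀ i, k ≤ (Z i).card }

/-!
For a monomial ideal `J`, the classes of the monomials `x^a ∉ J` form a basis of `S ⧸ J`, so a
Stanley decomposition of `S ⧸ J` by spaces `x^{d i} K[Z i]` is the same thing as a partition of
the exponents `a` with `x^a ∉ J` into the cones `d i + ℕ^{Z i}`. The radical `√I` is again a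
monomial ideal, and `x^a ∉ √I` iff `t • a` is such an exponent for `I` for every `t`.

Given a cone partition for `I`, keep the cones with `supp (d i) ⊆ Z i` and replace `d i` by its
squarefree part. If `x^a ∉ √I` and `g` exceeds every entry of every `d i`, then `g • a` lies in
some cone `d i + ℕ^{Z i}`, which forces `supp (d i) ⊆ supp a ⊆ Z i`; so the new cones cover the
exponents outside `√I`, and they inherit disjointness from the old ones. The new decomposition
uses only old sets `Z i`, whence `sdepth(S/I) ≤ sdepth(S/√I)`.
-/

section LinearAlgebra

variable {α ι V : Type*} [AddCommGroup V] [Module K V] {v : α → V} {s : Set α}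

theorem LinearIndepOn.iSupIndep_span_image_iff (hv : LinearIndepOn K v s) {C : ι → Set α}
    (hC : ∀ i, C i ⊆ s) :
    iSupIndep (fun i => Submodule.span K (v '' C i)) ↔
      Pairwise fun i j => Disjoint (C i) (C j) := by
  constructor
  · intro h i j hij
    refine Set.disjoint_left.2 fun a hai haj => hv.ne_zero (hC i hai) ?_
    exact Submodule.disjoint_def.1 (h.pairwiseDisjoint hij)
      _ (Submodule.subset_span ⟨a, hai, rfl⟩) (Submodule.subset_span ⟨a, haj, rfl⟩)
  · intro h i
    have hrest : (⨆ (j) (_ : j ≠ i), Submodule.span K (v '' C j))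
        = Submodule.span K (v '' ⋃ (j) (_ : j ≠ i), C j) := by
      simp only [Set.image_iUnion, Submodule.span_iUnion]
    have hdisj : Disjoint (C i) (⋃ (j) (_ : j ≠ i), C j) :=
      Set.disjoint_iUnion₂_right.2 fun j hji => h hji.symm
    rw [hrest]
    refine ((linearIndepOn_union_iff hdisj).1 (hv.mono ?_)).2.2
    exact Set.union_subset (hC i) (Set.iUnion₂_subset fun j _ => hC j)

theorem LinearIndepOn.span_image_eq_top_iff (hv : LinearIndepOn K v s)
    (hs : Submodule.span K (v '' s) = ⊤) {t : Set α} (ht : t ⊆ s) :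
    Submodule.span K (v '' t) = ⊤ ↔ s ⊆ t := by
  refine ⟨fun h a ha => ?_, fun h => eq_top_iff.2 (hs ▸ Submodule.span_mono (Set.image_mono h))⟩
  exact (hv.mono ht).mem_span_iff.1 (h ▸ Submodule.mem_top) (hv.mono (Set.insert_subset ha ht))

end LinearAlgebra

section MonomialIdeal

variable {n : ℕ} {I J : Ideal (MvPolynomial (Fin n) K)}

theorem isMonomialIdeal_iff :
    IsMonomialIdeal J ↔ ∀ f ∈ J, ∀ a ∈ f.support, monomial a (1 : K) ∈ J := by
  classical
  constructor
  · rintro ⟨G, hG, rfl⟩ f hf a ha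
    have hG' : G = (monomial · 1) '' {d | monomial d (1 : K) ∈ G} := by
      ext u
      refine ⟨fun hu => ?_, fun ⟨d, hd, hdu⟩ => hdu ▸ hd⟩
      obtain ⟨d, rfl⟩ := hG u hu
      exact ⟨d, hu, rfl⟩
    rw [hG', mem_ideal_span_monomial_image] at hf ⊢
    intro b hb
    rw [support_monomial, if_neg one_ne_zero, Finset.mem_singleton] at hb
    exact hb ▸ hf a ha
  · intro h
    refine ⟨(monomial · 1) '' {a | monomial a (1 : K) ∈ J}, fun u ⟨a, _, hau⟩ => ⟨a, hau.symm⟩,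
      le_antisymm (fun f hf => ?_) (Ideal.span_le.2 (Set.image_subset_iff.2 fun a ha => ha))⟩
    exact mem_ideal_span_monomial_image.2 fun a ha => ⟨a, h f hf a ha, le_rfl⟩

theorem IsMonomialIdeal.monomial_mem_of_mem_support (hJ : IsMonomialIdeal J)
    {f : MvPolynomial (Fin n) K} (hf : f ∈ J) {a : Fin n →₀ ℕ} (ha : a ∈ f.support) :
    monomial a (1 : K) ∈ J :=
  isMonomialIdeal_iff.1 hJ f hf a ha

theorem IsMonomialIdeal.monomial_degree_mem_radical (m : MonomialOrder (Fin n))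
    (hI : IsMonomialIdeal I) {f : MvPolynomial (Fin n) K} (hf : f ∈ I.radical) (hf0 : f ≠ 0) :
    monomial (m.degree f) (1 : K) ∈ I.radical := by
  obtain ⟨t, ht⟩ := hf
  refine ⟨t, ?_⟩
  rw [monomial_pow, one_pow]
  refine hI.monomial_mem_of_mem_support ht ?_
  rw [mem_support_iff, m.coeff_pow_nsmul_degree]
  exact pow_ne_zero _ (m.leadingCoeff_ne_zero_iff.2 hf0)

/-- Descend along the leading exponent: the leading monomial of `f ∈ √I` lies in `√I`, hence so
does `f` minus its leading term. -/
theorem IsMonomialIdeal.radical (hI : IsMonomialIdeal I) : IsMonomialIdeal I.radical := by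
  let m : MonomialOrder (Fin n) := MonomialOrder.lex
  refine isMonomialIdeal_iff.2 fun f hf a ha => ?_
  induction hd : m.toSyn (m.degree f) using WellFoundedLT.induction generalizing f with
  | ind d ih =>
    have hf0 : f ≠ 0 := by rintro rfl; simp at ha
    obtain rfl | had := eq_or_ne a (m.degree f)
    · exact hI.monomial_degree_mem_radical m hf hf0
    have hdeg : m.degree f ≠ 0 := fun h0 => had <| m.toSyn.injective <| by
      rw [h0, map_zero, m.eq_zero_iff, ← map_zero m.toSyn, ← h0]
      exact m.le_degree ha
    have hlt := m.degree_sub_leadingTerm_lt_degree hdeg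
    have hLT : m.leadingTerm f ∈ I.radical := by
      rw [MonomialOrder.leadingTerm, ← mul_one (m.leadingCoeff f), ← C_mul_monomial]
      exact Ideal.mul_mem_left _ _ (hI.monomial_degree_mem_radical m hf hf0)
    refine ih _ (hd ▸ hlt) _ (Ideal.sub_mem _ hf hLT) ?_ rfl
    rwa [mem_support_iff, coeff_sub, MonomialOrder.leadingTerm, coeff_monomial, if_neg had.symm,
      sub_zero, ← mem_support_iff]

end MonomialIdeal

section Quotient

variable {n : ℕ} {I J : Ideal (MvPolynomial (Fin n) K)}

def standardExponents (J : Ideal (MvPolynomial (Fin n) K)) : Set (Fin n →₀ ℕ) :=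
  {a | monomial a (1 : K) ∉ J}

theorem mem_standardExponents_of_le {a b : Fin n →₀ ℕ} (hab : a ≤ b)
    (hb : b ∈ standardExponents J) : a ∈ standardExponents J :=
  fun ha => hb (Ideal.mem_of_dvd _ (monomial_dvd_monomial.2 ⟨Or.inr hab, one_dvd _⟩) ha)

theorem standardExponents_radical :
    standardExponents I.radical = {a | ∀ t : ℕ, t • a ∈ standardExponents I} := by
  ext a
  simp [standardExponents, Ideal.radical, monomial_pow]

theorem disjoint_restrictSupport_iff (hJ : IsMonomialIdeal J) {A : Set (Fin n →₀ ℕ)} :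
    Disjoint (restrictSupport K A) (J.restrictScalars K) ↔ A ⊆ standardExponents J := by
  rw [Submodule.disjoint_def]
  constructor
  · intro h a ha haJ
    exact monomial_eq_zero.not.2 one_ne_zero
      (h _ ((monomial_mem_restrictSupport K).2 (Or.inl ha)) haJ)
  · intro h f hfA hfJ
    by_contra hf0
    obtain ⟨a, ha⟩ := support_nonempty.2 hf0
    exact h ((mem_restrictSupport_iff K).1 hfA ha) (hJ.monomial_mem_of_mem_support hfJ ha)

theorem map_restrictScalars_top_mkₐ (J : Ideal (MvPolynomial (Fin n) K)) :
    (Submodule.restrictScalars K (⊤ : Ideal (MvPolynomial (Fin n) K))).map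
      (Ideal.Quotient.mkₐ K J).toLinearMap = ⊤ := by
  rw [Submodule.restrictScalars_top, Submodule.map_top, LinearMap.range_eq_top]
  exact Ideal.Quotient.mkₐ_surjective K J

theorem map_restrictSupport_mkₐ (J : Ideal (MvPolynomial (Fin n) K)) (A : Set (Fin n →₀ ℕ)) :
    (restrictSupport K A).map (Ideal.Quotient.mkₐ K J).toLinearMap
      = Submodule.span K ((fun a => Ideal.Quotient.mk J (monomial a 1)) '' A) := by
  rw [restrictSupport_eq_span, Submodule.map_span, ← Set.image_comp]
  rfl

theorem linearIndepOn_standardExponents (hJ : IsMonomialIdeal J) :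
    LinearIndepOn K (fun a => Ideal.Quotient.mk J (monomial a (1 : K))) (standardExponents J) := by
  have hmon : LinearIndepOn K (fun a => monomial a (1 : K)) (standardExponents J) := by
    simpa using (basisMonomials (Fin n) K).linearIndependent.linearIndepOn (standardExponents J)
  refine hmon.map (f := (Ideal.Quotient.mkₐ K J).toLinearMap) ?_
  rw [← Set.image_eq_range (fun a => monomial a (1 : K)), ← restrictSupport_eq_span]
  refine ((disjoint_restrictSupport_iff hJ).2 subset_rfl).mono_right fun f hf => ?_
  rwa [LinearMap.mem_ker, AlgHom.toLinearMap_apply, Ideal.Quotient.mkₐ_eq_mk,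
    Ideal.Quotient.eq_zero_iff_mem] at hf

theorem span_image_standardExponents_eq_top (J : Ideal (MvPolynomial (Fin n) K)) :
    Submodule.span K ((fun a => Ideal.Quotient.mk J (monomial a (1 : K))) '' standardExponents J)
      = ⊤ := by
  have huniv : restrictSupport K (Set.univ : Set (Fin n →₀ ℕ)) = ⊤ :=
    eq_top_iff.2 fun f _ => (mem_restrictSupport_iff K).2 (Set.subset_univ _)
  rw [eq_top_iff, ← map_restrictScalars_top_mkₐ J, Submodule.restrictScalars_top, ← huniv,
    map_restrictSupport_mkₐ, Submodule.span_le]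
  rintro _ ⟨a, -, rfl⟩
  by_cases ha : a ∈ standardExponents J
  · exact Submodule.subset_span ⟨a, ha, rfl⟩
  · dsimp only
    rw [SetLike.mem_coe, (Ideal.Quotient.eq_zero_iff_mem.2 (not_not.1 ha))]
    exact Submodule.zero_mem _

end Quotient

section Cone

variable {σ ι : Type*}

def cone (e : σ →₀ ℕ) (Z : Finset σ) : Set (σ →₀ ℕ) :=
  {a | ∃ c : σ →₀ ℕ, ↑c.support ⊆ (Z : Set σ) ∧ a = e + c}

theorem mem_cone_iff {e a : σ →₀ ℕ} {Z : Finset σ} :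
    a ∈ cone e Z ↔ e ≤ a ∧ ∀ x ∉ Z, a x = e x := by
  constructor
  · rintro ⟨c, hc, rfl⟩
    refine ⟨le_self_add, fun x hx => ?_⟩
    rw [Finsupp.add_apply, Finsupp.notMem_support_iff.1 fun h => hx (hc h), add_zero]
  · rintro ⟨hle, hout⟩
    refine ⟨a - e, fun x hx => ?_, (add_tsub_cancel_of_le hle).symm⟩
    by_contra hxZ
    exact Finsupp.mem_support_iff.1 hx (by rw [Finsupp.tsub_apply, hout x hxZ, tsub_self])

structure IsConePartition (N : Set (σ →₀ ℕ)) (d : ι → σ →₀ ℕ) (Z : ι → Finset σ) : Prop where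
  subset : ∀ i, cone (d i) (Z i) ⊆ N
  pairwise_disjoint : Pairwise fun i j => Disjoint (cone (d i) (Z i)) (cone (d j) (Z j))
  cover : N ⊆ ⋃ i, cone (d i) (Z i)

theorem IsConePartition.comp_equiv {κ : Type*} {N : Set (σ →₀ ℕ)} {d : ι → σ →₀ ℕ}
    {Z : ι → Finset σ} (h : IsConePartition N d Z) (e : κ ≃ ι) :
    IsConePartition N (d ∘ e) (Z ∘ e) where
  subset k := h.subset (e k)
  pairwise_disjoint _ _ hkl := h.pairwise_disjoint (e.injective.ne hkl)
  cover a ha := by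
    obtain ⟨i, hi⟩ := Set.mem_iUnion.1 (h.cover ha)
    exact Set.mem_iUnion.2 ⟨e.symm i, by simpa using hi⟩

noncomputable def squarefreePart (e : σ →₀ ℕ) : σ →₀ ℕ :=
  e.mapRange (fun k => min k 1) (by simp)

@[simp]
theorem squarefreePart_apply (e : σ →₀ ℕ) (x : σ) : squarefreePart e x = min (e x) 1 :=
  Finsupp.mapRange_apply ..

variable {N : Set (σ →₀ ℕ)} {d e : σ →₀ ℕ} {Z : Finset σ}

theorem cone_squarefreePart_subset (hN : ∀ ⦃a b⦄, a ≤ b → b ∈ N → a ∈ N)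
    (hdZ : d.support ⊆ Z) (hsub : cone d Z ⊆ N) :
    cone (squarefreePart d) Z ⊆ {a | ∀ t : ℕ, t • a ∈ N} := by
  intro a ha t
  refine hN le_add_self (hsub (mem_cone_iff.2 ⟨le_self_add, fun x hx => ?_⟩))
  have hdx : d x = 0 := Finsupp.notMem_support_iff.1 fun h => hx (hdZ h)
  simp [(mem_cone_iff.1 ha).2 x hx, hdx]

theorem add_add_mem_cone (hdZ : d.support ⊆ Z) {a : σ →₀ ℕ} (ha : a ∈ cone (squarefreePart d) Z)
    (he : squarefreePart e ≤ a) : a + d + e ∈ cone d Z := by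
  refine mem_cone_iff.2 ⟨le_add_right le_add_self, fun x hx => ?_⟩
  have hdx : d x = 0 := Finsupp.notMem_support_iff.1 fun h => hx (hdZ h)
  have hax := (mem_cone_iff.1 ha).2 x hx
  have hex := Finsupp.le_def.1 he x
  simp only [squarefreePart_apply, Finsupp.add_apply] at hax hex ⊢
  omega

theorem disjoint_cone_squarefreePart {Z' : Finset σ} (hdZ : d.support ⊆ Z) (heZ : e.support ⊆ Z')
    (h : Disjoint (cone d Z) (cone e Z')) :
    Disjoint (cone (squarefreePart d) Z) (cone (squarefreePart e) Z') := by
  refine Set.disjoint_left.2 fun a had hae => Set.disjoint_left.1 h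
    (add_add_mem_cone hdZ had (mem_cone_iff.1 hae).1) ?_
  rw [add_right_comm]
  exact add_add_mem_cone heZ hae (mem_cone_iff.1 had).1

theorem exists_mem_cone_squarefreePart [Fintype ι] {d : ι → σ →₀ ℕ} {Z : ι → Finset σ}
    (hcover : N ⊆ ⋃ i, cone (d i) (Z i)) {a : σ →₀ ℕ} (ha : ∀ t : ℕ, t • a ∈ N) :
    ∃ i, (d i).support ⊆ Z i ∧ a ∈ cone (squarefreePart (d i)) (Z i) := by
  obtain ⟨g, hg⟩ : ∃ g, ∀ i x, d i x < g :=
    ⟨∑ i, (d i).degree + 1, fun i x => Nat.lt_succ_of_le ((Finsupp.le_degree x (d i)).trans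
      (Finset.single_le_sum (f := fun j => (d j).degree) (fun j _ => Nat.zero_le _)
        (Finset.mem_univ i)))⟩
  obtain ⟨i, hi⟩ := Set.mem_iUnion.1 (hcover (ha g))
  rw [mem_cone_iff] at hi
  have hle : ∀ x, d i x ≤ g * a x := fun x => by simpa using Finsupp.le_def.1 hi.1 x
  have hout : ∀ x ∉ Z i, a x = 0 ∧ d i x = 0 := fun x hx => by
    have h1 : g * a x = d i x := by simpa using hi.2 x hx
    have h2 := hg i x
    rcases Nat.eq_zero_or_pos (a x) with h | h
    · simp_all
    · nlinarith
  refine ⟨i, fun x hx => ?_, mem_cone_iff.2 ⟨Finsupp.le_def.2 fun x => ?_, fun x hx => ?_⟩⟩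
  · by_contra hxZ
    exact Finsupp.mem_support_iff.1 hx (hout x hxZ).2
  · rcases Nat.eq_zero_or_pos (a x) with h | h
    · simpa [h] using hle x
    · simp only [squarefreePart_apply]
      omega
  · simp [(hout x hx).1, (hout x hx).2]

theorem IsConePartition.radical [Fintype ι] (hN : ∀ ⦃a b⦄, a ≤ b → b ∈ N → a ∈ N)
    {d : ι → σ →₀ ℕ} {Z : ι → Finset σ} (h : IsConePartition N d Z) :
    IsConePartition {a | ∀ t : ℕ, t • a ∈ N}
      (fun i : {i // (d i).support ⊆ Z i} => squarefreePart (d i)) (fun i => Z i) where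
  subset i := cone_squarefreePart_subset hN i.2 (h.subset i)
  pairwise_disjoint i j hij :=
    disjoint_cone_squarefreePart i.2 j.2 (h.pairwise_disjoint (Subtype.coe_injective.ne hij))
  cover a ha := by
    obtain ⟨i, hi, hai⟩ := exists_mem_cone_squarefreePart h.cover ha
    exact Set.mem_iUnion.2 ⟨⟨i, hi⟩, hai⟩

end Cone

section StanleyDecomposition

variable {n : ℕ} {I J : Ideal (MvPolynomial (Fin n) K)}

theorem stanleySpace_monomial (e : Fin n →₀ ℕ) (Z : Finset (Fin n)) :
    stanleySpace (monomial e (1 : K)) Z = restrictSupport K (cone e Z) := by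
  rw [stanleySpace, restrictSupport_eq_span]
  congr 1
  ext w
  constructor
  · rintro ⟨c, hc, rfl⟩
    exact ⟨e + c, ⟨c, hc, rfl⟩, by rw [monomial_mul, one_mul]⟩
  · rintro ⟨_, ⟨c, hc, rfl⟩, rfl⟩
    exact ⟨c, hc, by rw [monomial_mul, one_mul]⟩

theorem isStanleyDecompQuot_top_iff (hJ : IsMonomialIdeal J) {s : ℕ} {d : Fin s → Fin n →₀ ℕ}
    {Z : Fin s → Finset (Fin n)} :
    IsStanleyDecompQuot J ⊤ (fun i => monomial (d i) (1 : K)) Z ↔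
      IsConePartition (standardExponents J) d Z := by
  have hv := linearIndepOn_standardExponents hJ
  have hspan := span_image_standardExponents_eq_top J
  simp only [IsStanleyDecompQuot, stanleySpace_monomial, map_restrictSupport_mkₐ,
    map_restrictScalars_top_mkₐ, disjoint_restrictSupport_iff hJ, ← Submodule.span_iUnion,
    ← Set.image_iUnion]
  constructor
  · rintro ⟨-, -, hsub, hind, hsup⟩
    exact ⟨hsub, (hv.iSupIndep_span_image_iff hsub).1 hind,
      (hv.span_image_eq_top_iff hspan (Set.iUnion_subset hsub)).1 hsup⟩
  · rintro ⟨hsub, hdisj, hcover⟩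
    exact ⟨fun i => ⟨d i, rfl⟩, fun _ => Submodule.mem_top, hsub,
      (hv.iSupIndep_span_image_iff hsub).2 hdisj,
      (hv.span_image_eq_top_iff hspan (Set.iUnion_subset hsub)).2 hcover⟩

theorem IsStanleyDecompQuot.exists_radical (hI : IsMonomialIdeal I) {s : ℕ}
    {u : Fin s → MvPolynomial (Fin n) K} {Z : Fin s → Finset (Fin n)}
    (h : IsStanleyDecompQuot I ⊤ u Z) :
    ∃ (s' : ℕ) (u' : Fin s' → MvPolynomial (Fin n) K) (Z' : Fin s' → Finset (Fin n)),
      IsStanleyDecompQuot I.radical ⊤ u' Z' ∧ ∀ j, ∃ i, Z' j = Z i := by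
  classical
  choose d hd using h.1
  obtain rfl : u = fun i => monomial (d i) 1 := funext hd
  have hP := ((isStanleyDecompQuot_top_iff hI).1 h).radical
    fun _ _ hab hb => mem_standardExponents_of_le hab hb
  rw [← standardExponents_radical] at hP
  exact ⟨_, _, _, (isStanleyDecompQuot_top_iff hI.radical).2
    (hP.comp_equiv (Fintype.equivFin _).symm), fun j => ⟨_, rfl⟩⟩

theorem IsStanleyDecompQuot.pos_of_ne_top (hJ : J ≠ ⊤) {s : ℕ}
    {u : Fin s → MvPolynomial (Fin n) K} {Z : Fin s → Finset (Fin n)}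
    (h : IsStanleyDecompQuot J ⊤ u Z) : 0 < s := by
  rw [Nat.pos_iff_ne_zero]
  rintro rfl
  have hbot := h.2.2.2.2
  rw [iSup_of_empty, map_restrictScalars_top_mkₐ] at hbot
  have : Nontrivial (MvPolynomial (Fin n) K ⧸ J) := Ideal.Quotient.nontrivial_iff.2 hJ
  exact bot_ne_top hbot

theorem le_sdepthQuot_top (hJ : J ≠ ⊤) {s k : ℕ} {u : Fin s → MvPolynomial (Fin n) K}
    {Z : Fin s → Finset (Fin n)} (h : IsStanleyDecompQuot J ⊤ u Z) (hk : ∀ i, k ≤ (Z i).card) :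
    k ≤ sdepthQuot J ⊤ := by
  refine le_csSup ⟨n, ?_⟩ ⟨s, u, Z, h, hk⟩
  rintro k' ⟨s', u', Z', h', hk'⟩
  calc k' ≤ (Z' ⟨0, h'.pos_of_ne_top hJ⟩).card := hk' _
    _ ≤ n := by simpa using Finset.card_le_univ (Z' ⟨0, h'.pos_of_ne_top hJ⟩)

end StanleyDecomposition

/-- For a monomial ideal `I` of `S = K[x_1,…,x_n]`,
`sdepth(S/I) ≤ sdepth(S/√I)`. -/
theorem sdepthQuot_top_le_sdepthQuot_top_radical {n : ℕ} (I : Ideal (MvPolynomial (Fin n) K))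
    (hI : IsMonomialIdeal I) :
    sdepthQuot I ⊤ ≤ sdepthQuot I.radical ⊤ := by
  by_cases hItop : I = ⊤
  · rw [hItop, Ideal.radical_top]
  refine csSup_le' fun k ⟨s, u, Z, h, hk⟩ => ?_
  obtain ⟨s', u', Z', h', hZ'⟩ := h.exists_radical hI
  refine le_sdepthQuot_top (mt Ideal.radical_eq_top.1 hItop) h' fun j => ?_
  obtain ⟨i, hi⟩ := hZ' j
  exact hi ▸ hk i
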